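/- Fix an integer k ≥ 1 and consider the LCL problem Π_k. In the automaton M(Π_k) associated with the path-form of Π_k, the set of path-inflexible labels is exactly {a_1, b_1}. Moreover, for every 1 ≤ i ≤ k−1, in the automaton associated with the path-form of the restriction of Π_k to Σ_k ∖ ({a_1, b_1} ∪ {x_1, a_2, b_2} ∪ ⋯ ∪ {x_{i−1}, a_i, b_i}), the set of path-inflexible labels is exactly {x_i, a_{i+1}, b_{i+1}}. Consequently, iteratively removing all path-inflexible labels (and restricting the problem accordingly) empties the label set of Π_k after exactly k iterations. -/
import Mathlib


/-- The labels `a_i`, `b_i`, `x_i` used by the problems `Π_k`. -/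
inductive Lab : Type where
  | a : ℕ → Lab
  | b : ℕ → Lab
  | x : ℕ → Lab
deriving DecidableEq

/-- The label set `Σ_k = {a_1, b_1, x_1, a_2, b_2, x_2, …, x_{k−1}, a_k, b_k}`. -/
def SigmaK (k : ℕ) : Set Lab :=
  {ℓ | ∃ i, 1 ≤ i ∧ ((i ≤ k ∧ (ℓ = Lab.a i ∨ ℓ = Lab.b i)) ∨ (i ≤ k - 1 ∧ ℓ = Lab.x i))}

/-- The labels `{a_1, b_1, x_1, …, a_{i−1}, b_{i−1}, x_{i−1}}` (strictly below level `i`). -/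
def belowStrict (i : ℕ) : Set Lab :=
  {ℓ | ∃ j, 1 ≤ j ∧ j < i ∧ (ℓ = Lab.a j ∨ ℓ = Lab.b j ∨ ℓ = Lab.x j)}

/-- The labels `{a_1, b_1, x_1, …, x_{i−1}, a_i, b_i}`
(equivalently, `{a_1, b_1} ∪ {x_1, a_2, b_2} ∪ ⋯ ∪ {x_{i−1}, a_i, b_i}`). -/
def upTo (i : ℕ) : Set Lab :=
  belowStrict i ∪ {Lab.a i, Lab.b i}

/-- The configurations `C_k` of the problem `Π_k = (2, Σ_k, C_k)`, closed under
swapping the two child labels. -/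
def Ck (k : ℕ) : Set (Lab × Lab × Lab) :=
  {t | (∃ i, 1 ≤ i ∧ i ≤ k ∧
          ((t.1 = Lab.a i ∧ t.2.1 ∈ belowStrict i ∪ {Lab.b i} ∧
              t.2.2 ∈ belowStrict i ∪ {Lab.b i}) ∨
           (t.1 = Lab.b i ∧ t.2.1 ∈ belowStrict i ∪ {Lab.a i} ∧
              t.2.2 ∈ belowStrict i ∪ {Lab.a i}))) ∨
       (∃ i, 1 ≤ i ∧ i ≤ k - 1 ∧ t.1 = Lab.x i ∧
          ((t.2.1 ∈ SigmaK k ∧ t.2.2 ∈ upTo i) ∨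
           (t.2.2 ∈ SigmaK k ∧ t.2.1 ∈ upTo i)))}

/-- The edge relation of the automaton `M(Π')` associated with the path-form of
the restriction `Π'` of `Π_k` to the label set `S`: there is an edge from `y` to
`z` iff some configuration of `C_k` using only labels of `S` has parent label `y`
and `z` as one of the two child labels. -/
def edgeIn (k : ℕ) (S : Set Lab) (y z : Lab) : Prop :=
  ∃ c₁ c₂ : Lab, y ∈ S ∧ c₁ ∈ S ∧ c₂ ∈ S ∧ (y, c₁, c₂) ∈ Ck k ∧ (z = c₁ ∨ z = c₂)

/-- `y` is path-flexible in the restriction of `Π_k` to `S`: there is `K` such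
that for every `m ≥ K` there is a directed walk of length exactly `m` from `y`
to `y` in the automaton associated with the path-form of the restriction. -/
def FlexibleIn (k : ℕ) (S : Set Lab) (y : Lab) : Prop :=
  ∃ K : ℕ, ∀ m ≥ K, ∃ f : ℕ → Lab,
    f 0 = y ∧ f m = y ∧ ∀ i < m, edgeIn k S (f i) (f (i + 1))

/-- Iteratively removing all path-inflexible labels, starting from `Σ_k`. -/
def remIter (k : ℕ) : ℕ → Set Lab
  | 0 => SigmaK k
  | j + 1 => {σ ∈ remIter k j | FlexibleIn k (remIter k j) σ}

section
variable {k i j : ℕ} {c₁ c₂ z : Lab}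

@[simp] lemma sig_a : Lab.a i ∈ SigmaK k ↔ 1 ≤ i ∧ i ≤ k := by
  constructor
  · rintro ⟨j, hj, ⟨hjk, h | h⟩ | ⟨hjk, h⟩⟩ <;> simp_all
  · rintro ⟨h1, h2⟩; exact ⟨i, h1, Or.inl ⟨h2, Or.inl rfl⟩⟩

@[simp] lemma sig_b : Lab.b i ∈ SigmaK k ↔ 1 ≤ i ∧ i ≤ k := by
  constructor
  · rintro ⟨j, hj, ⟨hjk, h | h⟩ | ⟨hjk, h⟩⟩ <;> simp_all
  · rintro ⟨h1, h2⟩; exact ⟨i, h1, Or.inl ⟨h2, Or.inr rfl⟩⟩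

@[simp] lemma sig_x : Lab.x i ∈ SigmaK k ↔ 1 ≤ i ∧ i ≤ k - 1 := by
  constructor
  · rintro ⟨j, hj, ⟨hjk, h | h⟩ | ⟨hjk, h⟩⟩ <;> simp_all
  · rintro ⟨h1, h2⟩; exact ⟨i, h1, Or.inr ⟨h2, rfl⟩⟩

@[simp] lemma bs_a : Lab.a j ∈ belowStrict i ↔ 1 ≤ j ∧ j < i := by
  constructor
  · rintro ⟨n, h1, h2, h | h | h⟩ <;> simp_all
  · rintro ⟨h1, h2⟩; exact ⟨j, h1, h2, Or.inl rfl⟩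

@[simp] lemma bs_b : Lab.b j ∈ belowStrict i ↔ 1 ≤ j ∧ j < i := by
  constructor
  · rintro ⟨n, h1, h2, h | h | h⟩ <;> simp_all
  · rintro ⟨h1, h2⟩; exact ⟨j, h1, h2, Or.inr (Or.inl rfl)⟩

@[simp] lemma bs_x : Lab.x j ∈ belowStrict i ↔ 1 ≤ j ∧ j < i := by
  constructor
  · rintro ⟨n, h1, h2, h | h | h⟩ <;> simp_all
  · rintro ⟨h1, h2⟩; exact ⟨j, h1, h2, Or.inr (Or.inr rfl)⟩

@[simp] lemma upTo_a : Lab.a j ∈ upTo i ↔ (1 ≤ j ∧ j < i) ∨ j = i := by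
  simp [upTo]; tauto

@[simp] lemma upTo_b : Lab.b j ∈ upTo i ↔ (1 ≤ j ∧ j < i) ∨ j = i := by
  simp [upTo]; tauto

@[simp] lemma upTo_x : Lab.x j ∈ upTo i ↔ 1 ≤ j ∧ j < i := by
  simp [upTo]

end

section
variable {k i j : ℕ} {c₁ c₂ z y w : Lab} {S : Set Lab}

lemma ck_a : (Lab.a i, c₁, c₂) ∈ Ck k ↔
    1 ≤ i ∧ i ≤ k ∧ (c₁ ∈ belowStrict i ∨ c₁ = Lab.b i) ∧
      (c₂ ∈ belowStrict i ∨ c₂ = Lab.b i) := by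
  constructor
  · rintro (⟨n, h1, h2, ⟨he, ha, hb⟩ | ⟨he, ha, hb⟩⟩ | ⟨n, h1, h2, he, h⟩) <;>
      simp_all [Set.mem_union] <;> tauto
  · rintro ⟨h1, h2, ha, hb⟩
    exact Or.inl ⟨i, h1, h2, Or.inl ⟨rfl, by simp [Set.mem_union]; tauto,
      by simp [Set.mem_union]; tauto⟩⟩

lemma ck_b : (Lab.b i, c₁, c₂) ∈ Ck k ↔
    1 ≤ i ∧ i ≤ k ∧ (c₁ ∈ belowStrict i ∨ c₁ = Lab.a i) ∧
      (c₂ ∈ belowStrict i ∨ c₂ = Lab.a i) := by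
  constructor
  · rintro (⟨n, h1, h2, ⟨he, ha, hb⟩ | ⟨he, ha, hb⟩⟩ | ⟨n, h1, h2, he, h⟩) <;>
      simp_all [Set.mem_union] <;> tauto
  · rintro ⟨h1, h2, ha, hb⟩
    exact Or.inl ⟨i, h1, h2, Or.inr ⟨rfl, by simp [Set.mem_union]; tauto,
      by simp [Set.mem_union]; tauto⟩⟩

lemma ck_x : (Lab.x i, c₁, c₂) ∈ Ck k ↔
    1 ≤ i ∧ i ≤ k - 1 ∧ ((c₁ ∈ SigmaK k ∧ c₂ ∈ upTo i) ∨ (c₂ ∈ SigmaK k ∧ c₁ ∈ upTo i)) := by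
  constructor
  · rintro (⟨n, h1, h2, ⟨he, ha, hb⟩ | ⟨he, ha, hb⟩⟩ | ⟨n, h1, h2, he, h⟩) <;> simp_all
  · rintro ⟨h1, h2, h⟩
    exact Or.inr ⟨i, h1, h2, rfl, h⟩

/-- No outgoing edge from `x i` in the restriction to `SigmaK k \ upTo i`. -/
lemma no_edge_x : ¬ edgeIn k (SigmaK k \ upTo i) (Lab.x i) z := by
  rintro ⟨c₁, c₂, hy, hc₁, hc₂, hcfg, _⟩
  rw [ck_x] at hcfg
  rcases hcfg.2.2 with ⟨_, h⟩ | ⟨_, h⟩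
  · exact hc₂.2 h
  · exact hc₁.2 h

/-- Walks of all lengths `m ≥ 2` via an intermediate vertex with a self-loop. -/
lemma flex_of {y z : Lab} (hyz : edgeIn k S y z) (hzz : edgeIn k S z z)
    (hzy : edgeIn k S z y) : FlexibleIn k S y := by
  refine ⟨2, fun m hm => ?_⟩
  refine ⟨fun i => if i = 0 ∨ m ≤ i then y else z, by simp, by simp, ?_⟩
  intro i hi
  dsimp only
  by_cases h0 : i = 0
  · subst h0
    have h1 : ¬(0 + 1 = 0 ∨ m ≤ 0 + 1) := by omega
    rw [if_pos (Or.inl rfl), if_neg h1]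
    exact hyz
  · have h1 : ¬(i = 0 ∨ m ≤ i) := by omega
    rw [if_neg h1]
    by_cases h2 : i + 1 = m
    · rw [if_pos (by omega)]; exact hzy
    · rw [if_neg (by omega)]; exact hzz

/-- Parity obstruction: if all edges from `u` go to `v` or a dead end `d`,
and symmetrically, then `u` is inflexible. -/
lemma inflex_parity {u v d : Lab} (huv : u ≠ v) (hud : u ≠ d) (hvd : v ≠ d)
    (hu : ∀ z, edgeIn k S u z → z = v ∨ z = d)
    (hv : ∀ z, edgeIn k S v z → z = u ∨ z = d)
    (hd : ∀ z, ¬ edgeIn k S d z) :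
    ¬ FlexibleIn k S u := by
  rintro ⟨K, hK⟩
  obtain ⟨f, hf0, hfm, hedge⟩ := hK (2 * K + 1) (by omega)
  set m := 2 * K + 1 with hm
  have hnd : ∀ j, j ≤ m → f j ≠ d := by
    intro j hj
    rcases eq_or_lt_of_le hj with h | h
    · rw [h, hfm]; exact hud
    · intro hc; exact hd _ (hc ▸ hedge j h)
  have hpar : ∀ j, j ≤ m → (j % 2 = 0 → f j = u) ∧ (j % 2 = 1 → f j = v) := by
    intro j
    induction j with
    | zero => exact fun _ => ⟨fun _ => hf0, fun h => by omega⟩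
    | succ n ih =>
      intro hj
      have hn := ih (by omega)
      have hlt : n < m := by omega
      constructor
      · intro he
        have hfn : f n = v := hn.2 (by omega)
        rcases hv _ (hfn ▸ hedge n hlt) with h | h
        · exact h
        · exact absurd h (hnd (n + 1) hj)
      · intro he
        have hfn : f n = u := hn.1 (by omega)
        rcases hu _ (hfn ▸ hedge n hlt) with h | h
        · exact h
        · exact absurd h (hnd (n + 1) hj)
  have := (hpar m le_rfl).2 (by omega)
  rw [hfm] at this
  exact huv this

end

section
variable {k i : ℕ} {σ c : Lab}

lemma bsS (hc : c ∈ SigmaK k \ upTo i) (h : c ∈ belowStrict (i + 1)) : c = Lab.x i := by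
  obtain ⟨-, hni⟩ := hc
  cases c <;> simp_all <;> omega

/-- Labels outside `upTo (i+1)` are flexible in the restriction to `SigmaK k \ upTo i`. -/
lemma flex_main (hσ : σ ∈ SigmaK k \ upTo i) (hnot : σ ∉ upTo (i + 1)) :
    FlexibleIn k (SigmaK k \ upTo i) σ := by
  obtain ⟨hs, hni⟩ := hσ
  cases σ with
  | a j =>
    rw [sig_a] at hs
    rw [upTo_a] at hni hnot
    obtain ⟨j', rfl⟩ : ∃ j', j = j' + 1 := ⟨j - 1, by omega⟩
    have hj' : i + 1 ≤ j' ∧ j' + 1 ≤ k := by omega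
    have hx : Lab.x j' ∈ SigmaK k \ upTo i := ⟨by simp <;> omega, by simp <;> omega⟩
    have ha' : Lab.a j' ∈ SigmaK k \ upTo i := ⟨by simp <;> omega, by simp <;> omega⟩
    have hself : Lab.a (j' + 1) ∈ SigmaK k \ upTo i := ⟨by simp <;> omega, by simp <;> omega⟩
    have e1 : edgeIn k (SigmaK k \ upTo i) (Lab.a (j' + 1)) (Lab.x j') := by
      refine ⟨Lab.x j', Lab.x j', hself, hx, hx, ?_, Or.inl rfl⟩
      rw [ck_a]
      exact ⟨by omega, by omega, Or.inl (by simp <;> omega), Or.inl (by simp <;> omega)⟩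
    have e2 : edgeIn k (SigmaK k \ upTo i) (Lab.x j') (Lab.x j') := by
      refine ⟨Lab.x j', Lab.a j', hx, hx, ha', ?_, Or.inl rfl⟩
      rw [ck_x]
      exact ⟨by omega, by omega, Or.inl ⟨by simp <;> omega, by simp <;> omega⟩⟩
    have e3 : edgeIn k (SigmaK k \ upTo i) (Lab.x j') (Lab.a (j' + 1)) := by
      refine ⟨Lab.a (j' + 1), Lab.a j', hx, hself, ha', ?_, Or.inl rfl⟩
      rw [ck_x]
      exact ⟨by omega, by omega, Or.inl ⟨by simp <;> omega, by simp <;> omega⟩⟩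
    exact flex_of e1 e2 e3
  | b j =>
    rw [sig_b] at hs
    rw [upTo_b] at hni hnot
    obtain ⟨j', rfl⟩ : ∃ j', j = j' + 1 := ⟨j - 1, by omega⟩
    have hj' : i + 1 ≤ j' ∧ j' + 1 ≤ k := by omega
    have hx : Lab.x j' ∈ SigmaK k \ upTo i := ⟨by simp <;> omega, by simp <;> omega⟩
    have ha' : Lab.a j' ∈ SigmaK k \ upTo i := ⟨by simp <;> omega, by simp <;> omega⟩
    have hself : Lab.b (j' + 1) ∈ SigmaK k \ upTo i := ⟨by simp <;> omega, by simp <;> omega⟩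
    have e1 : edgeIn k (SigmaK k \ upTo i) (Lab.b (j' + 1)) (Lab.x j') := by
      refine ⟨Lab.x j', Lab.x j', hself, hx, hx, ?_, Or.inl rfl⟩
      rw [ck_b]
      exact ⟨by omega, by omega, Or.inl (by simp <;> omega), Or.inl (by simp <;> omega)⟩
    have e2 : edgeIn k (SigmaK k \ upTo i) (Lab.x j') (Lab.x j') := by
      refine ⟨Lab.x j', Lab.a j', hx, hx, ha', ?_, Or.inl rfl⟩
      rw [ck_x]
      exact ⟨by omega, by omega, Or.inl ⟨by simp <;> omega, by simp <;> omega⟩⟩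
    have e3 : edgeIn k (SigmaK k \ upTo i) (Lab.x j') (Lab.b (j' + 1)) := by
      refine ⟨Lab.b (j' + 1), Lab.a j', hx, hself, ha', ?_, Or.inl rfl⟩
      rw [ck_x]
      exact ⟨by omega, by omega, Or.inl ⟨by simp <;> omega, by simp <;> omega⟩⟩
    exact flex_of e1 e2 e3
  | x j =>
    rw [sig_x] at hs
    rw [upTo_x] at hni hnot
    have ha' : Lab.a j ∈ SigmaK k \ upTo i := ⟨by simp <;> omega, by simp <;> omega⟩
    have hself : Lab.x j ∈ SigmaK k \ upTo i := ⟨by simp <;> omega, by simp <;> omega⟩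
    have e : edgeIn k (SigmaK k \ upTo i) (Lab.x j) (Lab.x j) := by
      refine ⟨Lab.x j, Lab.a j, hself, hself, ha', ?_, Or.inl rfl⟩
      rw [ck_x]
      exact ⟨by omega, by omega, Or.inl ⟨by simp <;> omega, by simp <;> omega⟩⟩
    exact flex_of e e e

/-- Labels of `upTo (i+1)` are inflexible in the restriction to `SigmaK k \ upTo i`. -/
lemma inflex_main (hσ : σ ∈ SigmaK k \ upTo i) (hup : σ ∈ upTo (i + 1)) :
    ¬ FlexibleIn k (SigmaK k \ upTo i) σ := by
  obtain ⟨hs, hni⟩ := hσ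
  cases σ with
  | a j =>
    rw [sig_a] at hs; rw [upTo_a] at hni hup
    obtain rfl : j = i + 1 := by omega
    refine inflex_parity (v := Lab.b (i + 1)) (d := Lab.x i) (by simp) (by simp) (by simp)
      ?_ ?_ (fun z => no_edge_x)
    · rintro z ⟨c₁, c₂, hy, hc₁, hc₂, hcfg, hz | hz⟩ <;> subst hz
      · rw [ck_a] at hcfg
        rcases hcfg.2.2.1 with h | h
        · exact Or.inr (bsS hc₁ h)
        · exact Or.inl h
      · rw [ck_a] at hcfg
        rcases hcfg.2.2.2 with h | h
        · exact Or.inr (bsS hc₂ h)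
        · exact Or.inl h
    · rintro z ⟨c₁, c₂, hy, hc₁, hc₂, hcfg, hz | hz⟩ <;> subst hz
      · rw [ck_b] at hcfg
        rcases hcfg.2.2.1 with h | h
        · exact Or.inr (bsS hc₁ h)
        · exact Or.inl h
      · rw [ck_b] at hcfg
        rcases hcfg.2.2.2 with h | h
        · exact Or.inr (bsS hc₂ h)
        · exact Or.inl h
  | b j =>
    rw [sig_b] at hs; rw [upTo_b] at hni hup
    obtain rfl : j = i + 1 := by omega
    refine inflex_parity (v := Lab.a (i + 1)) (d := Lab.x i) (by simp) (by simp) (by simp)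
      ?_ ?_ (fun z => no_edge_x)
    · rintro z ⟨c₁, c₂, hy, hc₁, hc₂, hcfg, hz | hz⟩ <;> subst hz
      · rw [ck_b] at hcfg
        rcases hcfg.2.2.1 with h | h
        · exact Or.inr (bsS hc₁ h)
        · exact Or.inl h
      · rw [ck_b] at hcfg
        rcases hcfg.2.2.2 with h | h
        · exact Or.inr (bsS hc₂ h)
        · exact Or.inl h
    · rintro z ⟨c₁, c₂, hy, hc₁, hc₂, hcfg, hz | hz⟩ <;> subst hz
      · rw [ck_a] at hcfg
        rcases hcfg.2.2.1 with h | h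
        · exact Or.inr (bsS hc₁ h)
        · exact Or.inl h
      · rw [ck_a] at hcfg
        rcases hcfg.2.2.2 with h | h
        · exact Or.inr (bsS hc₂ h)
        · exact Or.inl h
  | x j =>
    rw [sig_x] at hs; rw [upTo_x] at hni hup
    obtain rfl : j = i := by omega
    rintro ⟨K, hK⟩
    obtain ⟨f, hf0, -, hedge⟩ := hK (K + 1) (by omega)
    exact no_edge_x (hf0 ▸ hedge 0 (by omega))

lemma key (hσ : σ ∈ SigmaK k \ upTo i) :
    ¬ FlexibleIn k (SigmaK k \ upTo i) σ ↔ σ ∈ upTo (i + 1) := by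
  constructor
  · intro h; by_contra hup; exact h (flex_main hσ hup)
  · exact inflex_main hσ

end

lemma S0 {k : ℕ} : SigmaK k \ upTo 0 = SigmaK k := by
  ext σ; cases σ <;> simp <;> omega

lemma upTo_mono {k i : ℕ} {σ : Lab} (hs : σ ∈ SigmaK k) (h : σ ∈ upTo i) :
    σ ∈ upTo (i + 1) := by
  cases σ <;> simp_all <;> omega

lemma key0 {k : ℕ} {σ : Lab} (h : σ ∈ SigmaK k) :
    ¬ FlexibleIn k (SigmaK k) σ ↔ σ ∈ upTo 1 := by
  have h' : σ ∈ SigmaK k \ upTo 0 := S0.symm ▸ h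
  have := key h'
  rwa [S0] at this

lemma remIter_eq {k : ℕ} : ∀ j, j ≤ k → remIter k j = SigmaK k \ upTo j := by
  intro j
  induction j with
  | zero => intro _; exact S0.symm
  | succ n ih =>
    intro hj
    have hS := ih (by omega)
    show {σ ∈ remIter k n | FlexibleIn k (remIter k n) σ} = _
    rw [hS]
    ext σ
    simp only [Set.mem_sep_iff]
    constructor
    · rintro ⟨hσ, hf⟩
      exact ⟨hσ.1, fun h => (key hσ).mpr h hf⟩
    · rintro ⟨hs, hn⟩
      have hσ : σ ∈ SigmaK k \ upTo n := ⟨hs, fun h => hn (upTo_mono hs h)⟩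
      refine ⟨hσ, ?_⟩
      by_contra hnf
      exact hn ((key hσ).mp hnf)


/-- in `M(Π_k)` the path-inflexible labels are exactly `{a_1, b_1}`;
for every `1 ≤ i ≤ k−1`, in the automaton of the path-form of the restriction of
`Π_k` to `Σ_k ∖ ({a_1,b_1} ∪ {x_1,a_2,b_2} ∪ ⋯ ∪ {x_{i−1},a_i,b_i})` the
path-inflexible labels are exactly `{x_i, a_{i+1}, b_{i+1}}`; consequently,
iteratively removing all path-inflexible labels empties the label set of `Π_k`
after exactly `k` iterations. -/
theorem stmt15 (k : ℕ) (hk : 1 ≤ k) :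
    ({σ ∈ SigmaK k | ¬ FlexibleIn k (SigmaK k) σ} = {Lab.a 1, Lab.b 1}) ∧
    (∀ i, 1 ≤ i → i ≤ k - 1 →
      {σ ∈ SigmaK k \ upTo i | ¬ FlexibleIn k (SigmaK k \ upTo i) σ} =
        {Lab.x i, Lab.a (i + 1), Lab.b (i + 1)}) ∧
    (remIter k k = ∅ ∧ ∀ j < k, remIter k j ≠ ∅) := by
  refine ⟨?_, ?_, ?_, ?_⟩
  · ext σ
    simp only [Set.mem_sep_iff, Set.mem_insert_iff, Set.mem_singleton_iff]
    constructor
    · rintro ⟨hs, hnf⟩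
      have hup := (key0 hs).mp hnf
      cases σ <;> simp_all <;> omega
    · rintro (rfl | rfl)
      · exact ⟨by simp <;> omega, (key0 (by simp <;> omega)).mpr (by simp)⟩
      · exact ⟨by simp <;> omega, (key0 (by simp <;> omega)).mpr (by simp)⟩
  · intro i h1 hik
    ext σ
    simp only [Set.mem_sep_iff, Set.mem_insert_iff, Set.mem_singleton_iff]
    constructor
    · rintro ⟨hσ, hnf⟩
      have hup := (key hσ).mp hnf
      obtain ⟨hs, hni⟩ := hσ
      cases σ <;> simp_all <;> omega
    · rintro (rfl | rfl | rfl)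
      · have hσ : Lab.x i ∈ SigmaK k \ upTo i := ⟨by simp <;> omega, by simp <;> omega⟩
        exact ⟨hσ, (key hσ).mpr (by simp <;> omega)⟩
      · have hσ : Lab.a (i + 1) ∈ SigmaK k \ upTo i := ⟨by simp <;> omega, by simp <;> omega⟩
        exact ⟨hσ, (key hσ).mpr (by simp <;> omega)⟩
      · have hσ : Lab.b (i + 1) ∈ SigmaK k \ upTo i := ⟨by simp <;> omega, by simp <;> omega⟩
        exact ⟨hσ, (key hσ).mpr (by simp <;> omega)⟩
  · rw [remIter_eq k le_rfl]
    ext σ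
    cases σ <;> simp <;> omega
  · intro j hj h
    rw [remIter_eq j (le_of_lt hj)] at h
    have : Lab.a k ∈ SigmaK k \ upTo j := ⟨by simp <;> omega, by simp <;> omega⟩
    rw [h] at this
    exact this
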